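/- arXiv:2412.17398 — 3 statements merged into one kernel-verified Lean document; each statement's English description precedes it below -/
import Mathlib

section
/- Let A be an abelian category, let j, k ≥ 0, and let φ : {0,…,j} → {0,…,k} be a monotone map. If F : Ar[k] → A is an exact functor, then the composite of F with the functor Ar[j] → Ar[k] given on objects by (p,q) ↦ (φ(p), φ(q)) is an exact functor Ar[j] → A. Consequently, the assignment [k] ↦ S_k(A), with simplicial structure maps given by precomposition along these functors, defines a simplicial groupoid. -/
open CategoryTheory CategoryTheory.Limits

universe v u

variable {A : Type u} [Category.{v} A]

/-- The arrow poset `Ar[k]`: pairs `(i,j)` with `0 ≤ i ≤ j ≤ k`, ordered componentwise. -/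
abbrev ArO (k : ℕ) : Type := {p : Fin (k + 1) × Fin (k + 1) // p.1 ≤ p.2}

/-- A functor `Ar[k] ⥤ A` is exact if it sends diagonal objects to zero objects,
morphisms fixing the first coordinate to monomorphisms, morphisms fixing the second
coordinate to epimorphisms, and all the squares built out of those to bicartesian squares. -/
structure IsExactF {k : ℕ} (F : ArO k ⥤ A) : Prop where
  zero : ∀ x : ArO k, x.1.1 = x.1.2 → IsZero (F.obj x)
  mono : ∀ (x y : ArO k) (h : x ≤ y), x.1.1 = y.1.1 → Mono (F.map (homOfLE h))
  epi : ∀ (x y : ArO k) (h : x ≤ y), x.1.2 = y.1.2 → Epi (F.map (homOfLE h))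
  bicart : ∀ (a b c d : ArO k) (hab : a ≤ b) (hac : a ≤ c) (hbd : b ≤ d) (hcd : c ≤ d),
    a.1.1 = b.1.1 → c.1.1 = d.1.1 → a.1.2 = c.1.2 → b.1.2 = d.1.2 →
    IsPushout (F.map (homOfLE hab)) (F.map (homOfLE hac))
      (F.map (homOfLE hbd)) (F.map (homOfLE hcd)) ∧
    IsPullback (F.map (homOfLE hab)) (F.map (homOfLE hac))
      (F.map (homOfLE hbd)) (F.map (homOfLE hcd))

/-- The Waldhausen groupoid `S_k(A)`: exact functors `Ar[k] ⥤ A` and natural isomorphisms. -/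
abbrev SGpd (A : Type u) [Category.{v} A] (k : ℕ) : Type (max u v) :=
  Core (ObjectProperty.FullSubcategory fun F : ArO k ⥤ A => IsExactF F)

/-- The functor `Ar[j] ⥤ Ar[k]` induced on arrow posets by a monotone map of vertices,
`(p,q) ↦ (φ p, φ q)`. -/
def arHom {j k : ℕ} (φ : Fin (j + 1) →o Fin (k + 1)) : ArO j ⥤ ArO k :=
  Monotone.functor (f := fun x => (⟨(φ x.1.1, φ x.1.2), φ.monotone x.2⟩ : ArO k))
    (fun _ _ h => ⟨φ.monotone h.1, φ.monotone h.2⟩)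

/-- Precomposition along the map of arrow posets induced by a monotone map
`φ : {0,…,j} → {0,…,k}` carries exact functors `Ar[k] ⥤ A` to exact functors `Ar[j] ⥤ A`
(this is what makes `[k] ↦ S_k(A)` into a simplicial groupoid). -/
theorem statement0 {A : Type u} [Category.{v} A] [Abelian A]
    {j k : ℕ} (φ : Fin (j + 1) →o Fin (k + 1)) (F : ArO k ⥤ A) (hF : IsExactF F) :
    IsExactF (arHom φ ⋙ F) := by
  constructor
  · intro x hx
    exact hF.zero _ (by simp [arHom, Monotone.functor, hx])
  · intro x y h hxy
    have : (arHom φ ⋙ F).map (homOfLE h) =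
        F.map (homOfLE ((arHom φ).monotone h)) := by
      exact congrArg F.map (Subsingleton.elim _ _)
    rw [this]
    exact hF.mono _ _ _ (by simp [arHom, Monotone.functor, hxy])
  · intro x y h hxy
    have : (arHom φ ⋙ F).map (homOfLE h) =
        F.map (homOfLE ((arHom φ).monotone h)) := by
      exact congrArg F.map (Subsingleton.elim _ _)
    rw [this]
    exact hF.epi _ _ _ (by simp [arHom, Monotone.functor, hxy])
  · intro a b c d hab hac hbd hcd h1 h2 h3 h4
    have eab : (arHom φ ⋙ F).map (homOfLE hab) =
        F.map (homOfLE ((arHom φ).monotone hab)) := congrArg F.map (Subsingleton.elim _ _)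
    have eac : (arHom φ ⋙ F).map (homOfLE hac) =
        F.map (homOfLE ((arHom φ).monotone hac)) := congrArg F.map (Subsingleton.elim _ _)
    have ebd : (arHom φ ⋙ F).map (homOfLE hbd) =
        F.map (homOfLE ((arHom φ).monotone hbd)) := congrArg F.map (Subsingleton.elim _ _)
    have ecd : (arHom φ ⋙ F).map (homOfLE hcd) =
        F.map (homOfLE ((arHom φ).monotone hcd)) := congrArg F.map (Subsingleton.elim _ _)
    rw [eab, eac, ebd, ecd]
    exact hF.bicart _ _ _ _ _ _ _ _ (by simp [arHom, Monotone.functor, h1]) (by simp [arHom, Monotone.functor, h2])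
      (by simp [arHom, Monotone.functor, h3]) (by simp [arHom, Monotone.functor, h4])
end

section
/- Let A be an abelian category and k ≥ 1. The functor S_k(A) → Seq_k(A) sending an exact functor F : Ar[k] → A to its 0-th row, i.e. the chain of monomorphisms F(0,1) → F(0,2) → ⋯ → F(0,k), and sending a natural isomorphism to its restriction to the objects (0,1),…,(0,k), is an equivalence of groupoids. -/
open CategoryTheory CategoryTheory.Limits

universe v u

variable {A : Type u} [Category.{v} A]

/-- A functor `Fin k ⥤ A` all of whose maps are monomorphisms: a chain of `k - 1`
composable monomorphisms `A_1 ⟶ A_2 ⟶ ⋯ ⟶ A_k`. -/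
def IsMonoChain {k : ℕ} (F : Fin k ⥤ A) : Prop :=
  ∀ (x y : Fin k) (h : x ≤ y), Mono (F.map (homOfLE h))

/-- The groupoid `Seq_k(A)` of chains of `k - 1` composable monomorphisms and levelwise
isomorphisms between them. -/
abbrev SeqGpd (A : Type u) [Category.{v} A] (k : ℕ) : Type (max u v) :=
  Core (ObjectProperty.FullSubcategory fun F : Fin k ⥤ A => IsMonoChain F)

/-- The inclusion of the `0`-th row: `x ↦ (0, x + 1)`. -/
def rowFun (k : ℕ) : Fin k ⥤ ArO k :=
  Monotone.functor (f := fun x : Fin k => (⟨(0, x.succ), Fin.zero_le _⟩ : ArO k))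
    (fun _ _ h => ⟨le_refl _, Fin.succ_le_succ_iff.mpr h⟩)


noncomputable section
namespace S1Aux

section General
variable {C : Type*} [Category C] [Abelian C]

theorem isPullback_of_isPushout_of_mono {Z X Y P : C} {f : Z ⟶ X} {g : Z ⟶ Y}
    {h : X ⟶ P} {i : Y ⟶ P} (H : IsPushout f g h i) [Mono f] : IsPullback f g h i := by
  let u : Z ⟶ X ⊞ Y := biprod.lift f (-g)
  let d : X ⊞ Y ⟶ P := biprod.desc h i
  have hud : u ≫ d = 0 := by simp [u, d, H.w]
  have key : ∀ {W : C} (g' : X ⊞ Y ⟶ W), u ≫ g' = 0 →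
      f ≫ biprod.inl ≫ g' = g ≫ biprod.inr ≫ g' := by
    intro W g' hg'
    have he : g' = biprod.desc (biprod.inl ≫ g') (biprod.inr ≫ g') := by
      ext <;> simp
    rw [he] at hg'
    simp only [u, biprod.lift_desc, Preadditive.neg_comp] at hg'
    rw [← sub_eq_zero]
    simpa [sub_eq_add_neg] using hg'
  have hcolim : IsColimit (CokernelCofork.ofπ d hud) := by
    refine CokernelCofork.IsColimit.ofπ d hud
      (fun {W} g' hg' => H.desc (biprod.inl ≫ g') (biprod.inr ≫ g') (key g' hg'))
      (fun {W} g' hg' => ?_) (fun {W} g' hg' m hm => ?_)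
    · apply biprod.hom_ext' <;> simp [d]
    · apply H.hom_ext
      · have := congrArg (fun t => biprod.inl ≫ t) hm
        simpa [d] using this
      · have := congrArg (fun t => biprod.inr ≫ t) hm
        simpa [d] using this
  have hu : Mono u := mono_of_mono_fac (show u ≫ biprod.fst = f by simp [u])
  have hlim : IsLimit (KernelFork.ofι u hud) :=
    Abelian.monoIsKernelOfCokernel (CokernelCofork.ofπ d hud) hcolim
  refine IsPullback.of_isLimit' ⟨H.w⟩ ?_
  refine PullbackCone.IsLimit.mk H.w
    (fun s => (KernelFork.IsLimit.lift' hlim (biprod.lift s.fst (-s.snd))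
      (by simp [u, d, sub_eq_zero, s.condition])).1)
    (fun s => ?_) (fun s => ?_) (fun s m hm1 hm2 => ?_)
  · have := (KernelFork.IsLimit.lift' hlim (biprod.lift s.fst (-s.snd))
      (by simp [u, d, sub_eq_zero, s.condition])).2
    have h2 := congrArg (fun t => t ≫ biprod.fst) this
    simpa [u] using h2
  · have := (KernelFork.IsLimit.lift' hlim (biprod.lift s.fst (-s.snd))
      (by simp [u, d, sub_eq_zero, s.condition])).2
    have h2 := congrArg (fun t => t ≫ biprod.snd) this
    simp [u] at h2
    simpa using congrArg Neg.neg h2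
  · refine Fork.IsLimit.hom_ext hlim ?_
    rw [(KernelFork.IsLimit.lift' hlim (biprod.lift s.fst (-s.snd))
      (by simp [u, d, sub_eq_zero, s.condition])).2]
    apply biprod.hom_ext <;> simp [u, hm1, hm2]

theorem isPushout_cokernel {X Y Z : C} (f : X ⟶ Y) (hZ : IsZero Z) (g : X ⟶ Z)
    (h : Z ⟶ cokernel f) : IsPushout f g (cokernel.π f) h := by
  have hg : g = 0 := hZ.eq_of_tgt _ _
  have hh : h = 0 := hZ.eq_of_src _ _
  have w : CommSq f g (cokernel.π f) h := ⟨by simp [hg, hh]⟩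
  refine IsPushout.of_isColimit' w ?_
  refine PushoutCocone.IsColimit.mk w.w
    (fun s => cokernel.desc f s.inl (by rw [s.condition, hZ.eq_of_src s.inr 0, comp_zero]))
    (fun s => by simp) (fun s => hZ.eq_of_src _ _) (fun s m hm1 hm2 => ?_)
  apply coequalizer.hom_ext
  simpa using hm1

end General

section Ext
open ZeroObject

variable [Abelian A] {k : ℕ}

def extObj (C : Fin k ⥤ A) : Fin (k + 1) → A
  | ⟨0, _⟩ => 0
  | ⟨m + 1, hm⟩ => C.obj ⟨m, Nat.lt_of_succ_lt_succ hm⟩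

def extMap (C : Fin k ⥤ A) : (x y : Fin (k + 1)) → x ≤ y → (extObj C x ⟶ extObj C y)
  | ⟨0, _⟩, _, _ => 0
  | ⟨_ + 1, _⟩, ⟨_ + 1, _⟩, h =>
      C.map (homOfLE (Fin.mk_le_mk.mpr (Nat.succ_le_succ_iff.mp (Fin.mk_le_mk.mp h))))
  | ⟨_ + 1, _⟩, ⟨0, _⟩, h => absurd (Fin.mk_le_mk.mp h) (by omega)

lemma isZero_extObj_zero (C : Fin k ⥤ A) (x : Fin (k+1)) (hx : x.val = 0) :
    IsZero (extObj C x) := by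
  obtain ⟨(_ | m), hm⟩ := x
  · rw [extObj]; exact isZero_zero A
  · exact absurd hx (by simp)

lemma extMap_refl (C : Fin k ⥤ A) (x : Fin (k + 1)) (h : x ≤ x) :
    extMap C x x h = 𝟙 _ := by
  obtain ⟨(_ | m), hm⟩ := x
  · exact (isZero_extObj_zero C _ rfl).eq_of_src _ _
  · show C.map _ = _
    rw [show (homOfLE _ : (⟨m, _⟩ : Fin k) ⟶ ⟨m, _⟩) = 𝟙 _ from rfl, C.map_id]
    rfl

lemma extMap_comp (C : Fin k ⥤ A) (x y z : Fin (k + 1)) (h : x ≤ y) (h' : y ≤ z) :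
    extMap C x y h ≫ extMap C y z h' = extMap C x z (h.trans h') := by
  obtain ⟨(_ | m), hm⟩ := x
  · apply (isZero_extObj_zero C _ rfl).eq_of_src
  · obtain ⟨(_ | n), hn⟩ := y
    · exact absurd (Fin.mk_le_mk.mp h) (by omega)
    · obtain ⟨(_ | p), hp⟩ := z
      · exact absurd (Fin.mk_le_mk.mp h') (by omega)
      · show C.map _ ≫ C.map _ = C.map _
        rw [← C.map_comp, homOfLE_comp]

lemma mono_extMap {C : Fin k ⥤ A} (hC : IsMonoChain C) (x y : Fin (k + 1)) (h : x ≤ y) :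
    Mono (extMap C x y h) := by
  obtain ⟨(_ | m), hm⟩ := x
  · constructor
    intro W a b _
    exact (isZero_extObj_zero C _ rfl).eq_of_tgt _ _
  · obtain ⟨(_ | n), hn⟩ := y
    · exact absurd (Fin.mk_le_mk.mp h) (by omega)
    · exact hC _ _ _

end Ext


section CokF
open ZeroObject
variable [Abelian A] {k : ℕ}

lemma extMap_comp_assoc (C : Fin k ⥤ A) (x y z : Fin (k + 1)) (h : x ≤ y) (h' : y ≤ z)
    {W : A} (t : extObj C z ⟶ W) :
    extMap C x y h ≫ extMap C y z h' ≫ t = extMap C x z (h.trans h') ≫ t := by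
  rw [← Category.assoc, extMap_comp]

def cokF (C : Fin k ⥤ A) : ArO k ⥤ A where
  obj x := cokernel (extMap C x.1.1 x.1.2 x.2)
  map {x y} f := cokernel.map _ _ (extMap C _ _ (leOfHom f).1) (extMap C _ _ (leOfHom f).2)
    (by rw [extMap_comp, extMap_comp])
  map_id x := by
    apply coequalizer.hom_ext
    simp [extMap_refl]
  map_comp {x y z} f g := by
    apply coequalizer.hom_ext
    simp [extMap_comp_assoc]

lemma π_cokF_map (C : Fin k ⥤ A) {i j i' j' : Fin (k + 1)} (hij : i ≤ j) (hi'j' : i' ≤ j')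
    (h : (⟨(i, j), hij⟩ : ArO k) ≤ ⟨(i', j'), hi'j'⟩) :
    cokernel.π (extMap C i j hij) ≫ (cokF C).map (homOfLE h) =
      extMap C j j' h.2 ≫ cokernel.π (extMap C i' j' hi'j') := by
  simp [cokF]

lemma isPushout_row (C : Fin k ⥤ A) (i j j' : Fin (k + 1)) (hij : i ≤ j) (hjj' : j ≤ j')
    (h : (⟨(i, j), hij⟩ : ArO k) ≤ ⟨(i, j'), hij.trans hjj'⟩) :
    IsPushout (extMap C j j' hjj') (cokernel.π (extMap C i j hij))
      (cokernel.π (extMap C i j' (hij.trans hjj')))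
      ((cokF C).map (homOfLE h)) := by
  have t := isPushout_cokernel (extMap C i j hij) (isZero_zero A)
    (0 : extObj C i ⟶ 0) (0 : (0 : A) ⟶ cokernel (extMap C i j hij))
  refine IsPushout.of_left ?_ ?_ t
  · rw [extMap_comp]
    exact isPushout_cokernel (extMap C i j' (hij.trans hjj')) (isZero_zero A) _ _
  · exact (π_cokF_map C hij (hij.trans hjj') h).symm

lemma mono_cokF_map {C : Fin k ⥤ A} (hC : IsMonoChain C) {x y : ArO k} (h : x ≤ y)
    (hxy : x.1.1 = y.1.1) : Mono ((cokF C).map (homOfLE h)) := by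
  obtain ⟨⟨i, j⟩, hij⟩ := x
  obtain ⟨⟨i', j'⟩, hij'⟩ := y
  obtain rfl : i = i' := hxy
  have hjj' : j ≤ j' := h.2
  have H := isPushout_row C i j j' hij hjj' h
  have : Mono (extMap C j j' hjj') := mono_extMap hC _ _ _
  have := Abelian.mono_inr_of_isColimit _ _ H.isColimit
  exact this

lemma epi_cokF_map (C : Fin k ⥤ A) {x y : ArO k} (h : x ≤ y)
    (hxy : x.1.2 = y.1.2) : Epi ((cokF C).map (homOfLE h)) := by
  obtain ⟨⟨i, j⟩, hij⟩ := x
  obtain ⟨⟨i', j'⟩, hij'⟩ := y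
  obtain rfl : j = j' := hxy
  have hfac := π_cokF_map C hij hij' h
  rw [extMap_refl, Category.id_comp] at hfac
  exact @epi_of_epi_fac _ _ _ _ _ _ _ _ (by exact coequalizer.π_epi) hfac

lemma isZero_cokF_diag (C : Fin k ⥤ A) (x : ArO k) (hx : x.1.1 = x.1.2) :
    IsZero ((cokF C).obj x) := by
  obtain ⟨⟨i, j⟩, hij⟩ := x
  obtain rfl : i = j := hx
  show IsZero (cokernel (extMap C i i hij))
  have : Epi (extMap C i i hij) := by rw [extMap_refl]; infer_instance
  exact (isZero_zero A).of_iso (cokernel.ofEpi _)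

lemma isExact_cokF {C : Fin k ⥤ A} (hC : IsMonoChain C) : IsExactF (cokF C) := by
  constructor
  · exact isZero_cokF_diag C
  · intro x y h hxy
    exact mono_cokF_map hC h hxy
  · intro x y h hxy
    exact epi_cokF_map C h hxy
  · intro a b c d hab hac hbd hcd h1 h2 h3 h4
    obtain ⟨⟨i, j⟩, hij⟩ := a
    obtain ⟨⟨ib, j'⟩, hibj'⟩ := b
    obtain ⟨⟨i', jc⟩, hi'jc⟩ := c
    obtain ⟨⟨id', jd⟩, hi'j'⟩ := d
    obtain rfl : i = ib := h1
    obtain rfl : i' = id' := h2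
    obtain rfl : j = jc := h3
    obtain rfl : j' = jd := h4
    have hii' : i ≤ i' := hac.1
    have hjj' : j ≤ j' := hab.2
    have hpo : IsPushout ((cokF C).map (homOfLE hab)) ((cokF C).map (homOfLE hac))
        ((cokF C).map (homOfLE hbd)) ((cokF C).map (homOfLE hcd)) := by
      have ttop : IsPushout (extMap C j j' hjj') (cokernel.π (extMap C i j hij))
          (cokernel.π (extMap C i j' hibj')) ((cokF C).map (homOfLE hab)) :=
        isPushout_row C i j j' hij hjj' hab
      have p : (cokF C).map (homOfLE hab) ≫ (cokF C).map (homOfLE hbd) =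
          (cokF C).map (homOfLE hac) ≫ (cokF C).map (homOfLE hcd) := by
        rw [← Functor.map_comp, ← Functor.map_comp]
        exact congrArg _ (Subsingleton.elim _ _)
      refine IsPushout.of_top ?_ p ttop
      have e1 : cokernel.π (extMap C i j hij) ≫ (cokF C).map (homOfLE hac) =
          cokernel.π (extMap C i' j hi'jc) := by
        rw [π_cokF_map C hij hi'jc hac, extMap_refl, Category.id_comp]
      have e2 : cokernel.π (extMap C i j' hibj') ≫ (cokF C).map (homOfLE hbd) =
          cokernel.π (extMap C i' j' hi'j') := by
        rw [π_cokF_map C hibj' hi'j' hbd, extMap_refl, Category.id_comp]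
      erw [e1, e2]
      exact isPushout_row C i' j j' hi'jc hjj' hcd
    refine ⟨hpo, ?_⟩
    have : Mono ((cokF C).map (homOfLE hab)) := mono_cokF_map hC hab rfl
    exact isPullback_of_isPushout_of_mono hpo

end CokF


section Row
variable [Abelian A] {k : ℕ}

lemma map_trans {P : Type*} [Preorder P] (F : P ⥤ A) {x y z : P}
    (h1 : x ≤ y) (h2 : y ≤ z) (h3 : x ≤ z) :
    F.map (homOfLE h1) ≫ F.map (homOfLE h2) = F.map (homOfLE h3) := by
  rw [← F.map_comp]
  exact congrArg _ (Subsingleton.elim _ _)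

def pt0 (j : Fin (k + 1)) : ArO k := ⟨(0, j), Fin.zero_le _⟩

def diag (i : Fin (k + 1)) : ArO k := ⟨(i, i), le_rfl⟩

lemma pushout_of_exact {F : ArO k ⥤ A} (hF : IsExactF F) (x : ArO k) :
    IsPushout (F.map (homOfLE (show pt0 x.1.1 ≤ pt0 x.1.2 from ⟨le_rfl, x.2⟩)))
      (F.map (homOfLE (show pt0 x.1.1 ≤ diag x.1.1 from ⟨Fin.zero_le _, le_rfl⟩)))
      (F.map (homOfLE (show pt0 x.1.2 ≤ x from ⟨Fin.zero_le _, le_rfl⟩)))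
      (F.map (homOfLE (show diag x.1.1 ≤ x from ⟨le_rfl, x.2⟩))) :=
  (hF.bicart (pt0 x.1.1) (pt0 x.1.2) (diag x.1.1) x _ _ _ _ rfl rfl rfl rfl).1

lemma hom_ext_of_exact {F G : ArO k ⥤ A} (hF : IsExactF F)
    {α β : F ⟶ G} (hrow : ∀ j : Fin (k + 1), α.app (pt0 j) = β.app (pt0 j)) : α = β := by
  ext x
  have hepi : Epi (F.map (homOfLE (show pt0 x.1.2 ≤ x from ⟨Fin.zero_le _, le_rfl⟩))) :=
    hF.epi _ _ _ rfl
  rw [← cancel_epi (F.map (homOfLE (show pt0 x.1.2 ≤ x from ⟨Fin.zero_le _, le_rfl⟩))),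
    α.naturality, β.naturality, hrow]

lemma hom_ext_of_row {F G : ArO k ⥤ A} (hF : IsExactF F) (hG : IsExactF G)
    {α β : F ⟶ G}
    (h : ∀ i : Fin k, α.app ((rowFun k).obj i) = β.app ((rowFun k).obj i)) : α = β := by
  apply hom_ext_of_exact hF
  intro j
  rcases Fin.eq_zero_or_eq_succ j with rfl | ⟨i, rfl⟩
  · exact (hG.zero (pt0 0) rfl).eq_of_tgt _ _
  · exact h i

def rowTrans {F G : ArO k ⥤ A} (ψ : rowFun k ⋙ F ⟶ rowFun k ⋙ G) (j : Fin (k + 1)) :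
    F.obj (pt0 j) ⟶ G.obj (pt0 j) :=
  Fin.cases (motive := fun j => F.obj (pt0 j) ⟶ G.obj (pt0 j)) 0 (fun i => ψ.app i) j

lemma rowTrans_succ {F G : ArO k ⥤ A} (ψ : rowFun k ⋙ F ⟶ rowFun k ⋙ G) (i : Fin k) :
    rowTrans ψ i.succ = ψ.app i := by
  rfl

lemma rowTrans_natural {F G : ArO k ⥤ A} (hF : IsExactF F)
    (ψ : rowFun k ⋙ F ⟶ rowFun k ⋙ G) {j j' : Fin (k + 1)} (h : j ≤ j') :
    F.map (homOfLE (show pt0 j ≤ pt0 j' from ⟨le_rfl, h⟩)) ≫ rowTrans ψ j' =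
      rowTrans ψ j ≫ G.map (homOfLE (show pt0 j ≤ pt0 j' from ⟨le_rfl, h⟩)) := by
  induction j using Fin.cases with
  | zero => exact (hF.zero (pt0 0) rfl).eq_of_src _ _
  | succ i =>
    induction j' using Fin.cases with
    | zero => exact absurd h (by simp [Fin.le_def, Fin.succ])
    | succ i' =>
      have hii' : i ≤ i' := Fin.succ_le_succ_iff.mp h
      rw [rowTrans_succ, rowTrans_succ]
      exact ψ.naturality (homOfLE hii')

def extendApp {F G : ArO k ⥤ A} (hF : IsExactF F) (hG : IsExactF G)
    (ψ : rowFun k ⋙ F ⟶ rowFun k ⋙ G) (x : ArO k) : F.obj x ⟶ G.obj x :=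
  (pushout_of_exact hF x).desc
    (rowTrans ψ x.1.2 ≫ G.map (homOfLE (show pt0 x.1.2 ≤ x from ⟨Fin.zero_le _, le_rfl⟩)))
    0 (by
      rw [comp_zero, ← Category.assoc, rowTrans_natural hF ψ x.2, Category.assoc,
        map_trans G _ _ (show pt0 x.1.1 ≤ x from ⟨Fin.zero_le _, x.2⟩),
        ← map_trans G (show pt0 x.1.1 ≤ diag x.1.1 from ⟨Fin.zero_le _, le_rfl⟩)
          (show diag x.1.1 ≤ x from ⟨le_rfl, x.2⟩),
        (hG.zero (diag x.1.1) rfl).eq_of_tgt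
          (G.map (homOfLE (show pt0 x.1.1 ≤ diag x.1.1 from ⟨Fin.zero_le _, le_rfl⟩))) 0]
      simp)

lemma extendApp_fac {F G : ArO k ⥤ A} (hF : IsExactF F) (hG : IsExactF G)
    (ψ : rowFun k ⋙ F ⟶ rowFun k ⋙ G) (x : ArO k) :
    F.map (homOfLE (show pt0 x.1.2 ≤ x from ⟨Fin.zero_le _, le_rfl⟩)) ≫
        extendApp hF hG ψ x =
      rowTrans ψ x.1.2 ≫ G.map (homOfLE (show pt0 x.1.2 ≤ x from ⟨Fin.zero_le _, le_rfl⟩)) :=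
  (pushout_of_exact hF x).inl_desc _ _ _

def extend {F G : ArO k ⥤ A} (hF : IsExactF F) (hG : IsExactF G)
    (ψ : rowFun k ⋙ F ⟶ rowFun k ⋙ G) : F ⟶ G where
  app := extendApp hF hG ψ
  naturality {x y} f := by
    have h22 : x.1.2 ≤ y.1.2 := (leOfHom f).2
    have hepi : Epi (F.map (homOfLE (show pt0 x.1.2 ≤ x from ⟨Fin.zero_le _, le_rfl⟩))) :=
      hF.epi _ _ _ rfl
    rw [← cancel_epi (F.map (homOfLE (show pt0 x.1.2 ≤ x from ⟨Fin.zero_le _, le_rfl⟩)))]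
    calc F.map (homOfLE (show pt0 x.1.2 ≤ x from ⟨Fin.zero_le _, le_rfl⟩)) ≫
          F.map f ≫ extendApp hF hG ψ y
        = (F.map (homOfLE (show pt0 x.1.2 ≤ pt0 y.1.2 from ⟨le_rfl, h22⟩)) ≫
            F.map (homOfLE (show pt0 y.1.2 ≤ y from ⟨Fin.zero_le _, le_rfl⟩))) ≫
            extendApp hF hG ψ y := by
          rw [← Category.assoc, Subsingleton.elim f (homOfLE (leOfHom f)),
            map_trans F _ _ (show pt0 x.1.2 ≤ y from ⟨Fin.zero_le _, h22⟩),
            map_trans F _ _ (show pt0 x.1.2 ≤ y from ⟨Fin.zero_le _, h22⟩)]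
      _ = F.map (homOfLE (show pt0 x.1.2 ≤ pt0 y.1.2 from ⟨le_rfl, h22⟩)) ≫
            rowTrans ψ y.1.2 ≫
            G.map (homOfLE (show pt0 y.1.2 ≤ y from ⟨Fin.zero_le _, le_rfl⟩)) := by
          rw [Category.assoc, extendApp_fac hF hG ψ y]
      _ = (rowTrans ψ x.1.2 ≫
            G.map (homOfLE (show pt0 x.1.2 ≤ pt0 y.1.2 from ⟨le_rfl, h22⟩))) ≫
            G.map (homOfLE (show pt0 y.1.2 ≤ y from ⟨Fin.zero_le _, le_rfl⟩)) := by
          rw [← Category.assoc, rowTrans_natural hF ψ h22]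
      _ = rowTrans ψ x.1.2 ≫
            G.map (homOfLE (show pt0 x.1.2 ≤ x from ⟨Fin.zero_le _, le_rfl⟩)) ≫ G.map f := by
          rw [Category.assoc, map_trans G _ _ (show pt0 x.1.2 ≤ y from ⟨Fin.zero_le _, h22⟩),
            Subsingleton.elim f (homOfLE (leOfHom f)),
            map_trans G _ _ (show pt0 x.1.2 ≤ y from ⟨Fin.zero_le _, h22⟩)]
      _ = (F.map (homOfLE (show pt0 x.1.2 ≤ x from ⟨Fin.zero_le _, le_rfl⟩)) ≫
            extendApp hF hG ψ x) ≫ G.map f := by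
          rw [extendApp_fac hF hG ψ x, Category.assoc]
      _ = F.map (homOfLE (show pt0 x.1.2 ≤ x from ⟨Fin.zero_le _, le_rfl⟩)) ≫
            extendApp hF hG ψ x ≫ G.map f := Category.assoc _ _ _

lemma extend_app_row {F G : ArO k ⥤ A} (hF : IsExactF F) (hG : IsExactF G)
    (ψ : rowFun k ⋙ F ⟶ rowFun k ⋙ G) (i : Fin k) :
    (extend hF hG ψ).app ((rowFun k).obj i) = ψ.app i := by
  show extendApp hF hG ψ ((rowFun k).obj i) = ψ.app i
  have hepi : Epi (F.map (homOfLE (show pt0 ((rowFun k).obj i).1.2 ≤ (rowFun k).obj i from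
      ⟨Fin.zero_le _, le_rfl⟩))) := hF.epi _ _ _ rfl
  rw [← cancel_epi (F.map (homOfLE (show pt0 ((rowFun k).obj i).1.2 ≤ (rowFun k).obj i from
      ⟨Fin.zero_le _, le_rfl⟩))), extendApp_fac hF hG ψ ((rowFun k).obj i)]
  exact (show rowTrans ψ i.succ ≫
      G.map (homOfLE (show pt0 i.succ ≤ pt0 i.succ from le_rfl)) =
      F.map (homOfLE (show pt0 i.succ ≤ pt0 i.succ from le_rfl)) ≫ ψ.app i by
    rw [rowTrans_succ]
    have h2 := rowTrans_natural hF ψ (le_refl (Fin.succ i))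
    rw [rowTrans_succ] at h2
    exact h2.symm)

end Row




section Main
open ZeroObject
variable (A) [Abelian A] (k : ℕ)

def R : SGpd A k ⥤ SeqGpd A k where
  obj X := ⟨⟨rowFun k ⋙ X.of.obj,
    fun x y h => X.of.property.mono ((rowFun k).obj x) ((rowFun k).obj y)
      ⟨le_rfl, Fin.succ_le_succ_iff.mpr h⟩ rfl⟩⟩
  map {X Y} η := CoreHom.mk (ObjectProperty.isoMk _
    (Functor.isoWhiskerLeft (rowFun k) ((ObjectProperty.ι _).mapIso η.iso)))
  map_id X := by
    apply Core.hom_ext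
    rfl
  map_comp {X Y Z} η η' := by
    apply Core.hom_ext
    rfl

instance : (R A k).Faithful where
  map_injective {X Y} η η' hh := by
    apply Core.hom_ext
    apply ObjectProperty.hom_ext
    apply hom_ext_of_row X.of.property Y.of.property
    intro i
    have h2 := congrArg (fun t => t.iso.hom.hom.app i) hh
    exact h2

instance : (R A k).Full where
  map_surjective {X Y} g := by
    refine ⟨(CoreHom.mk (ObjectProperty.isoMk _
      ⟨extend X.of.property Y.of.property
          (g.iso.hom.hom : rowFun k ⋙ X.of.obj ⟶ rowFun k ⋙ Y.of.obj),
        extend Y.of.property X.of.property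
          (g.iso.inv.hom : rowFun k ⋙ Y.of.obj ⟶ rowFun k ⋙ X.of.obj),
        ?_, ?_⟩) : X ⟶ Y), ?_⟩
    · apply hom_ext_of_row X.of.property X.of.property
      intro i
      erw [NatTrans.comp_app, NatTrans.id_app, extend_app_row, extend_app_row]
      have h2 : (g.iso.hom.hom ≫ g.iso.inv.hom : rowFun k ⋙ X.of.obj ⟶ rowFun k ⋙ X.of.obj)
        = 𝟙 _ := ObjectProperty.isoHom_inv_id_hom g.iso
      exact NatTrans.congr_app h2 i
    · apply hom_ext_of_row Y.of.property Y.of.property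
      intro i
      erw [NatTrans.comp_app, NatTrans.id_app, extend_app_row, extend_app_row]
      have h2 : (g.iso.inv.hom ≫ g.iso.hom.hom : rowFun k ⋙ Y.of.obj ⟶ rowFun k ⋙ Y.of.obj)
        = 𝟙 _ := ObjectProperty.isoInv_hom_id_hom g.iso
      exact NatTrans.congr_app h2 i
    · apply Core.hom_ext
      apply ObjectProperty.hom_ext
      ext i
      exact extend_app_row X.of.property Y.of.property _ i

variable {k}

def cokIso (C : Fin k ⥤ A) (j : Fin (k + 1)) (h0 : (0 : Fin (k + 1)) ≤ j) :
    cokernel (extMap C 0 j h0) ≅ extObj C j where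
  hom := cokernel.desc _ (𝟙 _) ((isZero_extObj_zero C 0 (by simp)).eq_of_src _ _)
  inv := cokernel.π _
  hom_inv_id := by
    apply coequalizer.hom_ext
    simp
  inv_hom_id := by simp

lemma cokIso_π (C : Fin k ⥤ A) (j : Fin (k + 1)) (h0 : (0 : Fin (k + 1)) ≤ j) :
    cokernel.π (extMap C 0 j h0) ≫ (cokIso A C j h0).hom = 𝟙 _ :=
  cokernel.π_desc _ _ _

lemma extMap_succ (C : Fin k ⥤ A) (x y : Fin k) (h : x.succ ≤ y.succ) (h' : x ≤ y) :
    extMap C x.succ y.succ h = C.map (homOfLE h') := by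
  obtain ⟨m, hm⟩ := x
  obtain ⟨n, hn⟩ := y
  show C.map _ = C.map _
  exact congrArg _ (Subsingleton.elim _ _)

def rowCokIso (C : Fin k ⥤ A) : rowFun k ⋙ cokF C ≅ C := by
  refine NatIso.ofComponents (fun i => cokIso A C i.succ (Fin.zero_le _)) (fun {i i'} f => ?_)
  apply coequalizer.hom_ext
  show cokernel.π (extMap C 0 i.succ (Fin.zero_le _)) ≫
      ((rowFun k ⋙ cokF C).map f ≫ (cokIso A C i'.succ (Fin.zero_le _)).hom) =
    cokernel.π (extMap C 0 i.succ (Fin.zero_le _)) ≫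
      ((cokIso A C i.succ (Fin.zero_le _)).hom ≫ C.map f)
  have h1 : cokernel.π (extMap C 0 i.succ (Fin.zero_le _)) ≫ (rowFun k ⋙ cokF C).map f =
      extMap C i.succ i'.succ (Fin.succ_le_succ_iff.mpr (leOfHom f)) ≫
        cokernel.π (extMap C 0 i'.succ (Fin.zero_le _)) := by
    show cokernel.π _ ≫ (cokF C).map ((rowFun k).map f) = _
    rw [show (rowFun k).map f = homOfLE (show (rowFun k).obj i ≤ (rowFun k).obj i' from
      ⟨le_rfl, Fin.succ_le_succ_iff.mpr (leOfHom f)⟩) from Subsingleton.elim _ _]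
    exact π_cokF_map C _ _ _
  erw [← Category.assoc, h1, Category.assoc, cokIso_π, ← Category.assoc, cokIso_π,
    Category.comp_id, Category.id_comp, extMap_succ A C i i' _ (leOfHom f)]
  exact congrArg _ (Subsingleton.elim _ _)

instance : (R A k).EssSurj where
  mem_essImage Y := by
    exact ⟨⟨⟨cokF Y.of.obj, isExact_cokF Y.of.property⟩⟩,
      ⟨Core.isoMk (ObjectProperty.isoMk _ (rowCokIso A Y.of.obj))⟩⟩

instance : (R A k).IsEquivalence where

end Main


end S1Aux
end

/-- For `k ≥ 1`, the functor `S_k(A) ⥤ Seq_k(A)` sending an exact functor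
`F : Ar[k] ⥤ A` to its `0`-th row `F(0,1) ⟶ F(0,2) ⟶ ⋯ ⟶ F(0,k)` (and a natural isomorphism
to its restriction to the objects `(0,1), …, (0,k)`) is an equivalence of groupoids. -/
theorem statement1 {A : Type u} [Category.{v} A] [Abelian A] (k : ℕ) (hk : 1 ≤ k) :
    ∃ e : SGpd A k ≌ SeqGpd A k,
      e.functor ⋙ Core.inclusion _ ⋙ ObjectProperty.ι _ =
        Core.inclusion _ ⋙ ObjectProperty.ι _ ⋙
          (Functor.whiskeringLeft (Fin k) (ArO k) A).obj (rowFun k) :=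
  ⟨(S1Aux.R A k).asEquivalence, rfl⟩
end

section
/- Let A be an abelian category and k ≥ 1. Every chain of k−1 composable monomorphisms A_1 → A_2 → ⋯ → A_k in A arises, up to equality, as the 0-th row of an exact functor: there exists an exact functor F : Ar[k] → A with F(0,j) = A_j for 1 ≤ j ≤ k and such that the maps F(0,j) → F(0,j') are the given monomorphisms and their composites. -/
open CategoryTheory CategoryTheory.Limits

universe v u

variable {A : Type u} [Category.{v} A]

/-! ### Auxiliary constructions -/

open ZeroObject

section
variable {A : Type u} [Category.{v} A] [Abelian A] {k : ℕ}

theorem homOfLE_self' {P : Type*} [Preorder P] {p : P} (h : p ≤ p) : homOfLE h = 𝟙 p := rfl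

variable (H : Fin (k + 1) ⥤ A)

@[reducible] noncomputable def F0 : ArO k ⥤ A where
  obj x := cokernel (H.map (homOfLE x.2))
  map {x y} f := cokernel.map _ _ (H.map (homOfLE (leOfHom f).1)) (H.map (homOfLE (leOfHom f).2))
      (by rw [← H.map_comp, ← H.map_comp]; rfl)
  map_id x := coequalizer.hom_ext (by simp)
  map_comp f g := coequalizer.hom_ext (by
    simp only [cokernel.π_desc, cokernel.π_desc_assoc, Category.assoc, Category.comp_id]
    rw [← H.map_comp_assoc]; rfl)

theorem π_F0_map {x y : ArO k} (f : x ⟶ y) (h2 : x.1.2 ≤ y.1.2) :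
    cokernel.π (H.map (homOfLE x.2)) ≫ (F0 H).map f
      = H.map (homOfLE h2) ≫ cokernel.π (H.map (homOfLE y.2)) :=
  cokernel.π_desc _ _ _

theorem exact₀ (x : ArO k) :
    (ShortComplex.mk (H.map (homOfLE x.2)) (cokernel.π _) (cokernel.condition _)).Exact :=
  ShortComplex.exact_of_g_is_cokernel _ (cokernelIsCokernel _)

theorem mono_core (hH : ∀ (p q : Fin (k + 1)) (h : p ≤ q), Mono (H.map (homOfLE h))) (i j j' : Fin (k + 1)) (hij : i ≤ j) (hjj : j ≤ j')
    (h : (⟨(i, j), hij⟩ : ArO k) ≤ ⟨(i, j'), hij.trans hjj⟩) :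
    Mono ((F0 H).map (homOfLE h)) := by
  set a : ArO k := ⟨(i, j), hij⟩
  set b : ArO k := ⟨(i, j'), hij.trans hjj⟩
  rw [Preadditive.mono_iff_cancel_zero]
  intro T u hu
  obtain ⟨T₁, π₁, hπ₁, z, hz⟩ :=
    surjective_up_to_refinements_of_epi (cokernel.π (H.map (homOfLE a.2))) u
  have hz2 : (z ≫ H.map (homOfLE hjj)) ≫ cokernel.π (H.map (homOfLE b.2)) = 0 := by
    rw [Category.assoc, ← π_F0_map H (homOfLE h) hjj, ← Category.assoc, ← hz]
    rw [Category.assoc, hu, comp_zero]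
  obtain ⟨T₂, π₂, hπ₂, v, hv⟩ := (exact₀ H b).exact_up_to_refinements _ hz2
  dsimp at hv
  have hv' : π₂ ≫ z = v ≫ H.map (homOfLE hij) := by
    haveI := hH j j' hjj
    rw [← cancel_mono (H.map (homOfLE hjj))]
    rw [Category.assoc, Category.assoc, ← H.map_comp]
    exact hv
  have h0 : (π₂ ≫ π₁) ≫ u = 0 := by
    rw [Category.assoc, hz, ← Category.assoc, hv', Category.assoc,
      cokernel.condition, comp_zero]
  haveI : Epi (π₂ ≫ π₁) := epi_comp _ _
  exact (cancel_epi (π₂ ≫ π₁)).1 (by rw [h0, comp_zero])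

theorem core_exact (i i' j j' : Fin (k + 1)) (h1 : i ≤ i') (h2 : i' ≤ j) (h3 : j ≤ j')
    (hab : (⟨(i, j), h1.trans h2⟩ : ArO k) ≤ ⟨(i, j'), (h1.trans h2).trans h3⟩)
    (hac : (⟨(i, j), h1.trans h2⟩ : ArO k) ≤ ⟨(i', j), h2⟩)
    (hbd : (⟨(i, j'), (h1.trans h2).trans h3⟩ : ArO k) ≤ ⟨(i', j'), h2.trans h3⟩)
    (hcd : (⟨(i', j), h2⟩ : ArO k) ≤ ⟨(i', j'), h2.trans h3⟩) :
    (ShortComplex.mk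
      (biprod.lift ((F0 H).map (homOfLE hab)) ((F0 H).map (homOfLE hac)))
      (biprod.desc ((F0 H).map (homOfLE hbd)) (-(F0 H).map (homOfLE hcd)))
      (by
        rw [biprod.lift_desc, Preadditive.comp_neg, ← Functor.map_comp, ← Functor.map_comp]
        exact add_neg_cancel _)).Exact := by
  rw [ShortComplex.exact_iff_exact_up_to_refinements]
  intro T y hy
  dsimp only at hy ⊢
  simp only [biprod.desc_eq, Preadditive.comp_add, Preadditive.comp_neg, ← sub_eq_add_neg,
    Preadditive.comp_sub, Category.assoc, sub_eq_zero] at hy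
  -- hy : y ≫ biprod.fst ≫ e' = y ≫ biprod.snd ≫ m'
  obtain ⟨T₁, π₁, hπ₁, z, hz⟩ :=
    surjective_up_to_refinements_of_epi (cokernel.π (H.map (homOfLE h2))) (y ≫ biprod.snd)
  obtain ⟨T₂, π₂, hπ₂, w, hw⟩ :=
    surjective_up_to_refinements_of_epi
      (cokernel.π (H.map (homOfLE ((h1.trans h2).trans h3)))) (π₁ ≫ y ≫ biprod.fst)
  have e1 : cokernel.π (H.map (homOfLE ((h1.trans h2).trans h3))) ≫ (F0 H).map (homOfLE hbd)
      = cokernel.π (H.map (homOfLE (h2.trans h3))) := by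
    rw [π_F0_map H (homOfLE hbd) (le_refl j'), homOfLE_self', H.map_id, Category.id_comp]
  have e2 : cokernel.π (H.map (homOfLE h2)) ≫ (F0 H).map (homOfLE hcd)
      = H.map (homOfLE h3) ≫ cokernel.π (H.map (homOfLE (h2.trans h3))) :=
    π_F0_map H (homOfLE hcd) h3
  have key : (w - π₂ ≫ z ≫ H.map (homOfLE h3))
      ≫ cokernel.π (H.map (homOfLE (h2.trans h3))) = 0 := by
    rw [Preadditive.sub_comp, Category.assoc, Category.assoc, sub_eq_zero]
    conv_lhs => rw [← e1]
    conv_rhs => rw [← e2]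
    rw [← reassoc_of% hw, ← reassoc_of% hz]
    simp only [Category.assoc]
    rw [hy]
  obtain ⟨T₃, π₃, hπ₃, v, hv⟩ :=
    (exact₀ H ⟨(i', j'), h2.trans h3⟩).exact_up_to_refinements _ key
  dsimp only at hv
  refine ⟨T₃, π₃ ≫ π₂ ≫ π₁, inferInstance,
    (v ≫ H.map (homOfLE h2) + π₃ ≫ π₂ ≫ z) ≫ cokernel.π (H.map (homOfLE (h1.trans h2))), ?_⟩
  apply biprod.hom_ext
  · have pam : cokernel.π (H.map (homOfLE (h1.trans h2))) ≫ (F0 H).map (homOfLE hab)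
        = H.map (homOfLE h3) ≫ cokernel.π (H.map (homOfLE ((h1.trans h2).trans h3))) :=
      π_F0_map H (homOfLE hab) h3
    simp only [Category.assoc, biprod.lift_fst]
    rw [pam, Preadditive.add_comp]
    have hv' : v ≫ H.map (homOfLE (h2.trans h3))
        = π₃ ≫ w - π₃ ≫ π₂ ≫ z ≫ H.map (homOfLE h3) := by
      rw [← hv]; simp only [Preadditive.comp_sub, Category.assoc]
    have step : (v ≫ H.map (homOfLE h2)) ≫ H.map (homOfLE h3)
          ≫ cokernel.π (H.map (homOfLE ((h1.trans h2).trans h3)))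
        = (v ≫ H.map (homOfLE (h2.trans h3)))
          ≫ cokernel.π (H.map (homOfLE ((h1.trans h2).trans h3))) := by
      simp only [Category.assoc, ← H.map_comp_assoc]
      rfl
    rw [step, hv']
    simp only [Preadditive.sub_comp, Category.assoc]
    rw [sub_add_cancel]
    rw [← hw]
  · have pae : cokernel.π (H.map (homOfLE (h1.trans h2))) ≫ (F0 H).map (homOfLE hac)
        = cokernel.π (H.map (homOfLE h2)) := by
      rw [π_F0_map H (homOfLE hac) (le_refl j), homOfLE_self', H.map_id, Category.id_comp]
    simp only [Category.assoc, biprod.lift_snd]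
    rw [pae, Preadditive.add_comp]
    have hz0 : (v ≫ H.map (homOfLE h2)) ≫ cokernel.π (H.map (homOfLE h2)) = 0 := by
      rw [Category.assoc, cokernel.condition, comp_zero]
    rw [hz0, zero_add]
    simp only [Category.assoc]
    rw [← hz]
end

section
variable {A : Type u} [Category.{v} A] [Abelian A] {k : ℕ} (H : Fin (k + 1) ⥤ A)

theorem epi_core {x y : ArO k} (h : x ≤ y) (e : x.1.2 = y.1.2) :
    Epi ((F0 H).map (homOfLE h)) := by
  obtain ⟨⟨p, q⟩, hx⟩ := x
  obtain ⟨⟨p', q'⟩, hy⟩ := y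
  dsimp at e
  subst e
  have : cokernel.π (H.map (homOfLE hx)) ≫ (F0 H).map (homOfLE h)
      = cokernel.π (H.map (homOfLE hy)) := by
    rw [π_F0_map H (homOfLE h) (le_refl q), homOfLE_self', H.map_id, Category.id_comp]
  have : Epi (cokernel.π (H.map (homOfLE hx)) ≫ (F0 H).map (homOfLE h)) := by
    rw [this]; infer_instance
  exact epi_of_epi (cokernel.π (H.map (homOfLE hx))) _

theorem core_bicart (hH : ∀ (p q : Fin (k + 1)) (h : p ≤ q), Mono (H.map (homOfLE h)))
    (i i' j j' : Fin (k + 1)) (h1 : i ≤ i') (h2 : i' ≤ j) (h3 : j ≤ j')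
    (hab : (⟨(i, j), h1.trans h2⟩ : ArO k) ≤ ⟨(i, j'), (h1.trans h2).trans h3⟩)
    (hac : (⟨(i, j), h1.trans h2⟩ : ArO k) ≤ ⟨(i', j), h2⟩)
    (hbd : (⟨(i, j'), (h1.trans h2).trans h3⟩ : ArO k) ≤ ⟨(i', j'), h2.trans h3⟩)
    (hcd : (⟨(i', j), h2⟩ : ArO k) ≤ ⟨(i', j'), h2.trans h3⟩) :
    IsPushout ((F0 H).map (homOfLE hab)) ((F0 H).map (homOfLE hac))
      ((F0 H).map (homOfLE hbd)) ((F0 H).map (homOfLE hcd)) ∧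
    IsPullback ((F0 H).map (homOfLE hab)) ((F0 H).map (homOfLE hac))
      ((F0 H).map (homOfLE hbd)) ((F0 H).map (homOfLE hcd)) := by
  have sq : CommSq ((F0 H).map (homOfLE hab)) ((F0 H).map (homOfLE hac))
      ((F0 H).map (homOfLE hbd)) ((F0 H).map (homOfLE hcd)) :=
    ⟨by rw [← Functor.map_comp, ← Functor.map_comp]⟩
  have hS₂ := core_exact H i i' j j' h1 h2 h3 hab hac hbd hcd
  haveI hm : Mono ((F0 H).map (homOfLE hab)) := mono_core H hH i j j' (h1.trans h2) h3 hab
  haveI : Mono (biprod.lift ((F0 H).map (homOfLE hab)) ((F0 H).map (homOfLE hac))) := by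
    haveI : Mono (biprod.lift ((F0 H).map (homOfLE hab)) ((F0 H).map (homOfLE hac))
        ≫ biprod.fst) := by rw [biprod.lift_fst]; exact hm
    exact mono_of_mono _ biprod.fst
  haveI he : Epi ((F0 H).map (homOfLE hbd)) := epi_core H hbd rfl
  constructor
  · -- pushout
    haveI : Epi (biprod.desc ((F0 H).map (homOfLE hbd)) ((F0 H).map (homOfLE hcd))) := by
      haveI : Epi (biprod.inl ≫ biprod.desc ((F0 H).map (homOfLE hbd))
          ((F0 H).map (homOfLE hcd))) := by rw [biprod.inl_desc]; exact he
      exact epi_of_epi biprod.inl _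
    have hS₁ : (ShortComplex.mk
        (biprod.lift ((F0 H).map (homOfLE hab)) (-(F0 H).map (homOfLE hac)))
        (biprod.desc ((F0 H).map (homOfLE hbd)) ((F0 H).map (homOfLE hcd)))
        (by
          rw [biprod.lift_desc, Preadditive.neg_comp, ← Functor.map_comp, ← Functor.map_comp]
          exact add_neg_cancel _)).Exact := by
      refine ShortComplex.exact_of_iso ?_ hS₂
      exact ShortComplex.isoMk (Iso.refl _)
        (⟨biprod.map (𝟙 _) (-𝟙 _), biprod.map (𝟙 _) (-𝟙 _), by ext <;> simp, by ext <;> simp⟩ :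
          (_ : A) ≅ _) (Iso.refl _) (by ext <;> simp) (by ext <;> simp)
    exact IsPushout.of_isColimit' sq
      ((sq.isColimitEquivIsColimitCokernelCofork).symm hS₁.gIsCokernel)
  · -- pullback
    exact IsPullback.of_isLimit' sq
      ((sq.isLimitEquivIsLimitKernelFork).symm hS₂.fIsKernel)
end

section
variable {A : Type u} [Category.{v} A] [Abelian A] {k : ℕ} (G : Fin k ⥤ A)

theorem homOfLE_self'' {P : Type*} [Preorder P] {p : P} (h : p ≤ p) : homOfLE h = 𝟙 p := rfl

theorem predmono {p q : Fin (k + 1)} (hp : p ≠ 0) (hq : q ≠ 0) (h : p ≤ q) :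
    p.pred hp ≤ q.pred hq := Fin.pred_le_pred_iff.mpr h

theorem nzero {p q : Fin (k + 1)} (hp : ¬ p = 0) (h : p ≤ q) : ¬ q = 0 := by
  intro hq; subst hq; exact hp (Fin.le_zero_iff.mp h)

/-- object part of the extension of `G` by a zero object. -/
noncomputable def exobj (q : Fin (k + 1)) : A :=
  if h : q = 0 then 0 else G.obj (q.pred h)

theorem exobj_ne {q : Fin (k + 1)} (hq : ¬ q = 0) : exobj G q = G.obj (q.pred hq) :=
  dif_neg hq

theorem isZero_exobj_zero : IsZero (exobj G (0 : Fin (k + 1))) := by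
  have h : exobj G (0 : Fin (k + 1)) = (0 : A) := dif_pos rfl
  rw [h]; exact isZero_zero A

noncomputable def extG : Fin (k + 1) ⥤ A where
  obj := exobj G
  map {p q} f := if hp : p = 0 then 0 else
    eqToHom (exobj_ne G hp) ≫ G.map (homOfLE (predmono hp (nzero hp (leOfHom f)) (leOfHom f)))
      ≫ eqToHom (exobj_ne G (nzero hp (leOfHom f))).symm
  map_id p := by
    by_cases hp : p = 0
    · have hz : IsZero (exobj G p) := by subst hp; exact isZero_exobj_zero G
      exact hz.eq_of_src _ _
    · simp only [dif_neg hp]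
      rw [homOfLE_self'', G.map_id]
      simp
  map_comp {p q r} f g := by
    by_cases hp : p = 0
    · have hz : IsZero (exobj G p) := by subst hp; exact isZero_exobj_zero G
      exact hz.eq_of_src _ _
    · have hq : ¬ q = 0 := nzero hp (leOfHom f)
      simp only [dif_neg hp, dif_neg hq]
      simp only [Category.assoc, eqToHom_trans_assoc, eqToHom_refl, Category.id_comp]
      rw [← G.map_comp_assoc]
      rfl

theorem extG_map {p q : Fin (k + 1)} (h : p ≤ q) (hp : ¬ p = 0) :
    (extG G).map (homOfLE h) = eqToHom (exobj_ne G hp)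
      ≫ G.map (homOfLE (predmono hp (nzero hp h) h))
      ≫ eqToHom (exobj_ne G (nzero hp h)).symm := by
  show dite _ _ _ = _
  exact dif_neg hp

theorem extG_map' {p q : Fin (k + 1)} (h : p ≤ q) (hp : ¬ p = 0) :
    (extG G).map (homOfLE h) = eqToHom (show (extG G).obj p = _ from exobj_ne G hp)
      ≫ G.map (homOfLE (predmono hp (nzero hp h) h))
      ≫ eqToHom (show _ = (extG G).obj q from (exobj_ne G (nzero hp h)).symm) :=
  extG_map G h hp

theorem extG_mono (hG : ∀ (x y : Fin k) (h : x ≤ y), Mono (G.map (homOfLE h)))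
    (p q : Fin (k + 1)) (h : p ≤ q) : Mono ((extG G).map (homOfLE h)) := by
  by_cases hp : p = 0
  · constructor
    intro T u v _
    have hz : IsZero ((extG G).obj p) := by
      show IsZero (exobj G p); subst hp; exact isZero_exobj_zero G
    exact hz.eq_of_tgt u v
  · rw [extG_map G h hp]
    haveI := hG _ _ (predmono hp (nzero hp h) h)
    haveI := mono_comp (G.map (homOfLE (predmono hp (nzero hp h) h))) (eqToHom (exobj_ne G (nzero hp h)).symm)
    exact mono_comp' (inferInstanceAs (Mono (eqToHom (exobj_ne G hp)))) this
end

section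
variable {A : Type u} [Category.{v} A] [Abelian A] {k : ℕ}

theorem isExactF_F0 (H : Fin (k + 1) ⥤ A)
    (hH : ∀ (p q : Fin (k + 1)) (h : p ≤ q), Mono (H.map (homOfLE h))) :
    IsExactF (F0 H) where
  zero x hx := by
    obtain ⟨⟨p, q⟩, hpq⟩ := x
    dsimp at hx
    subst hx
    have : IsIso (H.map (homOfLE hpq)) := by
      rw [homOfLE_self']
      infer_instance
    exact IsZero.of_iso (isZero_zero A) (cokernel.ofEpi _)
  mono x y h e := by
    obtain ⟨⟨p, q⟩, hx⟩ := x
    obtain ⟨⟨p', q'⟩, hy⟩ := y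
    dsimp at e
    subst e
    exact mono_core H hH p q q' hx h.2 h
  epi x y h e := epi_core H h e
  bicart a b c d hab hac hbd hcd e1 e2 e3 e4 := by
    obtain ⟨⟨ia, ja⟩, ha⟩ := a
    obtain ⟨⟨ib, jb⟩, hb⟩ := b
    obtain ⟨⟨ic, jc⟩, hc⟩ := c
    obtain ⟨⟨id', jd⟩, hd⟩ := d
    dsimp at e1 e2 e3 e4
    subst e1; subst e2; subst e3; subst e4
    exact core_bicart H hH ia ic ja jb hac.1 hc hab.2 hab hac hbd hcd

theorem isExactF_of_iso {F₁ F₂ : ArO k ⥤ A} (α : F₁ ≅ F₂) (h : IsExactF F₁) : IsExactF F₂ where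
  zero x hx := (h.zero x hx).of_iso (α.app x).symm
  mono x y hle e := by
    have hn : F₂.map (homOfLE hle) = (α.app x).inv ≫ F₁.map (homOfLE hle) ≫ (α.app y).hom := by
      simp
    rw [hn]
    haveI := h.mono x y hle e
    infer_instance
  epi x y hle e := by
    have hn : F₂.map (homOfLE hle) = (α.app x).inv ≫ F₁.map (homOfLE hle) ≫ (α.app y).hom := by
      simp
    rw [hn]
    haveI := h.epi x y hle e
    apply epi_comp
  bicart a b c d hab hac hbd hcd e1 e2 e3 e4 := by
    obtain ⟨hpo, hpb⟩ := h.bicart a b c d hab hac hbd hcd e1 e2 e3 e4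
    constructor
    · exact hpo.of_iso (α.app a) (α.app b) (α.app c) (α.app d)
        (α.hom.naturality _) (α.hom.naturality _) (α.hom.naturality _) (α.hom.naturality _)
    · exact hpb.of_iso (α.app a) (α.app b) (α.app c) (α.app d)
        (α.hom.naturality _) (α.hom.naturality _) (α.hom.naturality _) (α.hom.naturality _)

variable (G : Fin k ⥤ A)

noncomputable def rowIso (x : ArO k) (hx : x.1.1 = 0) :
    (F0 (extG G)).obj x ≅ (extG G).obj x.1.2 where
  hom := cokernel.desc _ (𝟙 _) (by
    have hz : IsZero ((extG G).obj x.1.1) := by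
      rw [hx]; exact isZero_exobj_zero G
    exact hz.eq_of_src _ _)
  inv := cokernel.π _
  hom_inv_id := by
    rw [← cancel_epi (cokernel.π _)]
    simp
  inv_hom_id := cokernel.π_desc _ _ _

theorem rowIso_nat {x y : ArO k} (f : x ⟶ y) (hx : x.1.1 = 0) (hy : y.1.1 = 0) :
    (rowIso G x hx).inv ≫ (F0 (extG G)).map f ≫ (rowIso G y hy).hom
      = (extG G).map (homOfLE (leOfHom f).2) := by
  show cokernel.π _ ≫ _ ≫ cokernel.desc _ (𝟙 _) _ = _
  rw [← Category.assoc, π_F0_map (extG G) f (leOfHom f).2, Category.assoc,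
    cokernel.π_desc, Category.comp_id]

@[reducible] noncomputable def objF (x : ArO k) : A :=
  if x.1.1 = 0 then (extG G).obj x.1.2 else (F0 (extG G)).obj x

noncomputable def eIso (x : ArO k) : (F0 (extG G)).obj x ≅ objF G x :=
  if h : x.1.1 = 0 then rowIso G x h ≪≫ eqToIso (if_pos h).symm
  else eqToIso (if_neg h).symm

noncomputable def FF : ArO k ⥤ A where
  obj := objF G
  map {x y} f := (eIso G x).inv ≫ (F0 (extG G)).map f ≫ (eIso G y).hom
  map_id x := by simp
  map_comp f g := by rw [Functor.map_comp]; simp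

noncomputable def alphaIso : F0 (extG G) ≅ FF G :=
  NatIso.ofComponents (eIso G) (by
    intro x y f
    show _ = _ ≫ (eIso G x).inv ≫ _ ≫ _
    rw [Iso.hom_inv_id_assoc])

theorem homOfLE_congr {P : Type*} [Preorder P] {p q p' q' : P} (ep : p = p') (eq' : q = q')
    (h : p ≤ q) (h' : p' ≤ q') :
    homOfLE h = eqToHom ep ≫ homOfLE h' ≫ eqToHom eq'.symm := by
  subst ep; subst eq'; rfl

theorem rowFun_fst (x : Fin k) : ((rowFun k).obj x).1.1 = 0 := rfl

theorem aux_row (x y : Fin k) (f : x ⟶ y) (a b : Fin (k + 1)) (ha : a = x.succ) (hb : b = y.succ)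
    (h : a ≤ b) {P Q : A} (e1 : P = (extG G).obj a) (e2 : (extG G).obj b = Q) (e3 : P = G.obj x)
    (e4 : G.obj y = Q) :
    eqToHom e1 ≫ (extG G).map (homOfLE h) ≫ eqToHom e2 = eqToHom e3 ≫ G.map f ≫ eqToHom e4 := by
  subst ha hb e3 e4
  rw [extG_map' G _ (Fin.succ_ne_zero x)]
  simp only [Category.assoc, eqToHom_trans_assoc, eqToHom_trans, eqToHom_refl, Category.id_comp,
    Category.comp_id]
  rfl

theorem FF_row_eq : rowFun k ⋙ FF G = G := by
  have hobj : ∀ x : Fin k, (rowFun k ⋙ FF G).obj x = G.obj x := by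
    intro x
    show objF G ⟨(0, x.succ), _⟩ = G.obj x
    rw [objF, if_pos rfl, show (extG G).obj x.succ = exobj G x.succ from rfl,
      exobj_ne G (Fin.succ_ne_zero x)]
    exact congrArg G.obj (Fin.pred_succ x)
  refine CategoryTheory.Functor.ext hobj ?_
  intro x y f
  show (eIso G _).inv ≫ (F0 (extG G)).map ((rowFun k).map f) ≫ (eIso G _).hom = _
  have ex : eIso G ((rowFun k).obj x)
      = rowIso G ((rowFun k).obj x) (rowFun_fst x) ≪≫ eqToIso (if_pos (rowFun_fst x)).symm := dif_pos (rowFun_fst x)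
  have ey : eIso G ((rowFun k).obj y)
      = rowIso G ((rowFun k).obj y) (rowFun_fst y) ≪≫ eqToIso (if_pos (rowFun_fst y)).symm := dif_pos (rowFun_fst y)
  rw [ex, ey]
  simp only [Iso.trans_inv, Iso.trans_hom, eqToIso.inv, eqToIso.hom, Category.assoc]
  rw [reassoc_of% (rowIso_nat G ((rowFun k).map f) (rowFun_fst x) (rowFun_fst y))]
  exact aux_row G x y f _ _ rfl rfl (leOfHom ((rowFun k).map f)).2 _ _ _ _
end

/-- For `k ≥ 1`, every chain of `k - 1` composable monomorphisms
`A_1 ⟶ ⋯ ⟶ A_k` in `A` arises, up to equality, as the `0`-th row of an exact functor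
`F : Ar[k] ⥤ A`. -/
theorem statement2 {A : Type u} [Category.{v} A] [Abelian A] (k : ℕ) (hk : 1 ≤ k)
    (G : Fin k ⥤ A) (hG : IsMonoChain G) :
    ∃ F : ArO k ⥤ A, IsExactF F ∧ rowFun k ⋙ F = G := by
  exact ⟨FF G, isExactF_of_iso (alphaIso G) (isExactF_F0 (extG G) (extG_mono G hG)),
    FF_row_eq G⟩
end
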